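/- arXiv:math/0109008 — 2 statements merged into one kernel-verified Lean document; each statement's English description precedes it below -/
import Mathlib

section
/- Let T and F be nonnegative n×n matrices with ρ(T) < 1, F ≠ 0, and P = T + F irreducible. Let s > ρ(T) and define q(s) = ρ(F(I−T/s)^{-1})/s. Then q(s) > 0 and ρ(T + F/q(s)) = s. -/
/-!
For `t > ρ(T)` put `Nₜ = (1 - t⁻¹ • T)⁻¹`, a nonnegative matrix (Neumann series). The factorisation
`1 - t⁻¹ • (T + G) = (1 - t⁻¹ • G * Nₜ) * (1 - t⁻¹ • T)` shows that `ρ(G * Nₜ) < t` forces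
`ρ(T + G) ≤ t`, and conversely that `ρ(T + G) < t` forces `ρ(G * Nₜ) ≤ t`. As `t ↦ Nₜ` is entrywise
antitone, taking `G = q⁻¹ • F` and `t` slightly above, resp. below, `s` pins `ρ(T + q⁻¹ • F)` at
`s`. If `q` were `0`, the first implication would give `ρ(T + c • F) ≤ s` for every `c > 0`, but
irreducibility puts a nonzero entry of `F` on a cycle of `T + F`, along which `ρ(T + c • F)` grows
without bound.

Spectral radii are compared through Gelfand's formula for the `ℓ∞` operator norm, which is
monotone in the absolute values of the entries.
-/

open Matrix Filter Topology

noncomputable def specRad {n : ℕ} (A : Matrix (Fin n) (Fin n) ℝ) : ℝ :=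
  (spectralRadius ℂ (A.map Complex.ofReal)).toReal

def MatIrred {n : ℕ} (A : Matrix (Fin n) (Fin n) ℝ) : Prop :=
  ∀ i j, ∃ k : ℕ, 0 < k ∧ 0 < (A ^ k) i j

def MatPrimitive {n : ℕ} (A : Matrix (Fin n) (Fin n) ℝ) : Prop :=
  ∃ k : ℕ, 0 < k ∧ ∀ i j, 0 < (A ^ k) i j

attribute [local instance] Matrix.linftyOpNormedAddCommGroup Matrix.linftyOpNormedRing
  Matrix.linftyOpNormedAlgebra

variable {n : ℕ}

namespace Matrix

variable {A B A' B' : Matrix (Fin n) (Fin n) ℝ}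

lemma nonneg_mul (hA : ∀ i j, 0 ≤ A i j) (hB : ∀ i j, 0 ≤ B i j) : ∀ i j, 0 ≤ (A * B) i j :=
  fun i j => by rw [mul_apply]; exact Finset.sum_nonneg fun k _ => mul_nonneg (hA i k) (hB k j)

lemma nonneg_one : ∀ i j : Fin n, 0 ≤ (1 : Matrix (Fin n) (Fin n) ℝ) i j := fun i j => by
  rw [one_apply]; split_ifs <;> norm_num

lemma nonneg_pow (hA : ∀ i j, 0 ≤ A i j) (m : ℕ) : ∀ i j, 0 ≤ (A ^ m) i j := by
  induction m with
  | zero => rw [pow_zero]; exact nonneg_one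
  | succ m ih => rw [pow_succ]; exact nonneg_mul ih hA

lemma nonneg_add (hA : ∀ i j, 0 ≤ A i j) (hB : ∀ i j, 0 ≤ B i j) : ∀ i j, 0 ≤ (A + B) i j :=
  fun i j => add_nonneg (hA i j) (hB i j)

lemma nonneg_smul {c : ℝ} (hc : 0 ≤ c) (hA : ∀ i j, 0 ≤ A i j) : ∀ i j, 0 ≤ (c • A) i j :=
  fun i j => mul_nonneg hc (hA i j)

lemma mul_le_mul_entrywise (hA : ∀ i j, 0 ≤ A i j) (hAA : ∀ i j, A i j ≤ A' i j)
    (hB : ∀ i j, 0 ≤ B i j) (hBB : ∀ i j, B i j ≤ B' i j) :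
    ∀ i j, (A * B) i j ≤ (A' * B') i j := fun i j => by
  rw [mul_apply, mul_apply]
  exact Finset.sum_le_sum fun k _ =>
    mul_le_mul (hAA i k) (hBB k j) (hB k j) ((hA i k).trans (hAA i k))

lemma pow_le_pow_entrywise (hA : ∀ i j, 0 ≤ A i j) (hAB : ∀ i j, A i j ≤ B i j) (m : ℕ) :
    ∀ i j, (A ^ m) i j ≤ (B ^ m) i j := by
  induction m with
  | zero => exact fun _ _ => le_rfl
  | succ m ih => rw [pow_succ, pow_succ]; exact mul_le_mul_entrywise (nonneg_pow hA m) ih hA hAB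

lemma apply_mul_apply_le_mul_apply (hA : ∀ i j, 0 ≤ A i j) (hB : ∀ i j, 0 ≤ B i j)
    (i k j : Fin n) : A i k * B k j ≤ (A * B) i j :=
  Finset.single_le_sum (fun l _ => mul_nonneg (hA i l) (hB l j)) (Finset.mem_univ k)

lemma abs_apply_le_linfty_norm (A : Matrix (Fin n) (Fin n) ℝ) (i j : Fin n) : |A i j| ≤ ‖A‖ := by
  have h : ‖A i j‖₊ ≤ ‖A‖₊ := by
    rw [linfty_opNNNorm_def]
    exact (Finset.single_le_sum (f := fun k => ‖A i k‖₊) (fun _ _ => zero_le)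
      (Finset.mem_univ j)).trans (Finset.le_sup (f := fun i => ∑ k, ‖A i k‖₊) (Finset.mem_univ i))
  exact_mod_cast h

lemma linfty_norm_le_of_abs_le (h : ∀ i j, |A i j| ≤ B i j) : ‖A‖ ≤ ‖B‖ := by
  have h' : ‖A‖₊ ≤ ‖B‖₊ := by
    rw [linfty_opNNNorm_def, linfty_opNNNorm_def]
    refine Finset.sup_mono_fun fun i _ => Finset.sum_le_sum fun j _ => ?_
    rw [← NNReal.coe_le_coe, coe_nnnorm, coe_nnnorm, Real.norm_eq_abs, Real.norm_eq_abs]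
    exact (h i j).trans (le_abs_self _)
  exact_mod_cast h'

end Matrix

open Matrix

section SpectralRadius

variable {A B : Matrix (Fin n) (Fin n) ℝ}

lemma specRad_nonneg (A : Matrix (Fin n) (Fin n) ℝ) : 0 ≤ specRad A := ENNReal.toReal_nonneg

lemma spectralRadius_map_ofReal_ne_top (A : Matrix (Fin n) (Fin n) ℝ) :
    spectralRadius ℂ (A.map Complex.ofReal) ≠ ⊤ := by
  refine ne_top_of_le_ne_top (ENNReal.mul_ne_top ?_ ?_)
    (spectrum.spectralRadius_le_pow_nnnorm_pow_one_div ℂ (A.map Complex.ofReal) 0) <;>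
  exact ENNReal.rpow_ne_top_of_nonneg (by norm_num) ENNReal.coe_ne_top

lemma linfty_norm_map_ofReal (A : Matrix (Fin n) (Fin n) ℝ) : ‖A.map Complex.ofReal‖ = ‖A‖ := by
  simp only [linfty_opNorm_def, map_apply, Complex.nnnorm_real]

theorem tendsto_norm_pow_one_div_specRad (A : Matrix (Fin n) (Fin n) ℝ) :
    Tendsto (fun m : ℕ => ‖A ^ m‖ ^ (1 / m : ℝ)) atTop (𝓝 (specRad A)) := by
  refine ((ENNReal.tendsto_toReal (spectralRadius_map_ofReal_ne_top A)).comp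
    (spectrum.pow_norm_pow_one_div_tendsto_nhds_spectralRadius (A.map Complex.ofReal))).congr
    fun m => ?_
  have hpow : A.map Complex.ofReal ^ m = (A ^ m).map Complex.ofReal :=
    (Matrix.map_pow A Complex.ofRealHom m).symm
  rw [Function.comp_apply, hpow, linfty_norm_map_ofReal, ENNReal.toReal_ofReal (by positivity)]

lemma specRad_smul (c : ℝ) (A : Matrix (Fin n) (Fin n) ℝ) :
    specRad (c • A) = |c| * specRad A := by
  refine tendsto_nhds_unique (tendsto_norm_pow_one_div_specRad (c • A))
    (((tendsto_norm_pow_one_div_specRad A).const_mul |c|).congr' ?_)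
  filter_upwards [eventually_ne_atTop 0] with m hm
  rw [smul_pow, norm_smul, Real.norm_eq_abs, abs_pow,
    Real.mul_rpow (by positivity) (norm_nonneg _), one_div, Real.pow_rpow_inv_natCast (abs_nonneg c) hm]

lemma specRad_mono (hA : ∀ i j, 0 ≤ A i j) (hAB : ∀ i j, A i j ≤ B i j) :
    specRad A ≤ specRad B := by
  refine le_of_tendsto_of_tendsto' (tendsto_norm_pow_one_div_specRad A)
    (tendsto_norm_pow_one_div_specRad B) fun m => Real.rpow_le_rpow (norm_nonneg _)
      (linfty_norm_le_of_abs_le fun i j => ?_) (by positivity)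
  rw [abs_of_nonneg (nonneg_pow hA m i j)]
  exact pow_le_pow_entrywise hA hAB m i j

lemma specRad_le_one_of_norm_pow_le {C : ℝ} (h : ∀ m, ‖A ^ m‖ ≤ C) : specRad A ≤ 1 := by
  have hC : 0 < max C 1 := lt_max_of_lt_right one_pos
  have hlim : Tendsto (fun m : ℕ => max C 1 ^ (1 / m : ℝ)) atTop (𝓝 1) := by
    simpa [Function.comp_def] using ((Real.continuousAt_const_rpow hC.ne').tendsto.comp
      tendsto_one_div_atTop_nhds_zero_nat)
  exact le_of_tendsto_of_tendsto' (tendsto_norm_pow_one_div_specRad A) hlim fun m =>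
    Real.rpow_le_rpow (norm_nonneg _) ((h m).trans (le_max_left C 1)) (by positivity)

lemma le_specRad_of_pow_le_diag (hA : ∀ i j, 0 ≤ A i j) {K : ℕ} (hK : K ≠ 0) {t : ℝ}
    (ht : 0 ≤ t) {i : Fin n} (h : t ^ K ≤ (A ^ K) i i) : t ≤ specRad A := by
  have hdiag : ∀ m, t ^ (K * m) ≤ (A ^ (K * m)) i i := by
    intro m
    induction m with
    | zero => simp
    | succ m ih =>
      rw [mul_add, mul_one, pow_add, pow_add]
      exact (mul_le_mul ih h (by positivity) (nonneg_pow hA _ i i)).trans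
        (apply_mul_apply_le_mul_apply (nonneg_pow hA _) (nonneg_pow hA _) i i i)
  have hsub : Tendsto (fun m : ℕ => K * m) atTop atTop :=
    tendsto_id.const_mul_atTop' (Nat.pos_of_ne_zero hK)
  refine ge_of_tendsto ((tendsto_norm_pow_one_div_specRad A).comp hsub) ?_
  filter_upwards [eventually_ne_atTop 0] with m hm
  have hKm : K * m ≠ 0 := mul_ne_zero hK hm
  calc t = (t ^ (K * m)) ^ (1 / ((K * m : ℕ) : ℝ)) := by
        rw [one_div, Real.pow_rpow_inv_natCast ht hKm]
    _ ≤ ‖A ^ (K * m)‖ ^ (1 / ((K * m : ℕ) : ℝ)) :=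
        Real.rpow_le_rpow (by positivity)
          ((hdiag m).trans ((le_abs_self _).trans (abs_apply_le_linfty_norm _ i i))) (by positivity)

theorem tendsto_pow_nhds_zero_of_specRad_lt_one (h : specRad A < 1) :
    Tendsto (fun m : ℕ => A ^ m) atTop (𝓝 0) := by
  obtain ⟨r, hAr, hr1⟩ := exists_between h
  have hr0 : 0 < r := (specRad_nonneg A).trans_lt hAr
  refine squeeze_zero_norm' ?_ (tendsto_pow_atTop_nhds_zero_of_lt_one hr0.le hr1)
  filter_upwards [(tendsto_norm_pow_one_div_specRad A).eventually_lt_const hAr,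
    eventually_ne_atTop 0] with m hm hm0
  rw [one_div, Real.rpow_inv_lt_iff_of_pos (norm_nonneg _) hr0.le (by positivity),
    Real.rpow_natCast] at hm
  exact hm.le

end SpectralRadius

theorem eq_geom_sum_add_pow_mul {R : Type*} [Semiring R] {x w : R} (h : 1 + x * w = w)
    (m : ℕ) : w = ∑ k ∈ Finset.range m, x ^ k + x ^ m * w := by
  induction m with
  | zero => simp
  | succ m ih =>
    calc w = 1 + x * w := h.symm
      _ = 1 + x * (∑ k ∈ Finset.range m, x ^ k + x ^ m * w) := by rw [← ih]
      _ = _ := by rw [geom_sum_succ, pow_succ', mul_add, mul_assoc]; abel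

section Neumann

variable {A X W : Matrix (Fin n) (Fin n) ℝ}

lemma isUnit_det_one_sub_of_specRad_lt_one (h : specRad A < 1) : IsUnit (1 - A).det := by
  rw [isUnit_iff_ne_zero]
  intro hdet
  obtain ⟨v, hv, hAv⟩ := exists_mulVec_eq_zero_iff.mpr hdet
  have hAv' : A *ᵥ v = v := by
    rw [sub_mulVec, one_mulVec, sub_eq_zero] at hAv
    exact hAv.symm
  have hfix : ∀ m : ℕ, (A ^ m) *ᵥ v = v := by
    intro m
    induction m with
    | zero => simp
    | succ m ih => rw [pow_succ, ← mulVec_mulVec, hAv', ih]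
  have hlim : Tendsto (fun m : ℕ => (A ^ m) *ᵥ v) atTop (𝓝 ((0 : Matrix _ _ ℝ) *ᵥ v)) :=
    ((continuous_id.matrix_mulVec continuous_const).tendsto 0).comp
      (tendsto_pow_nhds_zero_of_specRad_lt_one h)
  simp only [hfix, zero_mulVec, tendsto_const_nhds_iff] at hlim
  exact hv hlim

lemma inv_one_sub_nonneg (hA : ∀ i j, 0 ≤ A i j) (h : specRad A < 1) :
    ∀ i j, 0 ≤ (1 - A)⁻¹ i j := by
  set S := (1 - A)⁻¹
  have hS : 1 + A * S = S := by
    have h1 := mul_nonsing_inv (1 - A) (isUnit_det_one_sub_of_specRad_lt_one h)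
    rw [sub_mul, one_mul] at h1
    rw [← h1]
    abel
  have hlim : Tendsto (fun m : ℕ => S - A ^ m * S) atTop (𝓝 S) := by
    simpa using tendsto_const_nhds.sub ((tendsto_pow_nhds_zero_of_specRad_lt_one h).mul_const S)
  intro i j
  refine ge_of_tendsto' ((hlim.apply_nhds i).apply_nhds j) fun m => ?_
  rw [← eq_sub_of_add_eq (eq_geom_sum_add_pow_mul hS m).symm, Matrix.sum_apply]
  exact Finset.sum_nonneg fun k _ => nonneg_pow hA k i j

/-- `W = ∑_{k ≤ m} X ^ k + X ^ (m + 1) * W` dominates every power `X ^ m`. -/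
lemma specRad_le_one_of_one_sub_mul_eq_one (hX : ∀ i j, 0 ≤ X i j) (hW : ∀ i j, 0 ≤ W i j)
    (h : (1 - X) * W = 1) : specRad X ≤ 1 := by
  have hW' : 1 + X * W = W := by
    rw [sub_mul, one_mul] at h
    rw [← h]
    abel
  refine specRad_le_one_of_norm_pow_le (C := ‖W‖) fun m =>
    linfty_norm_le_of_abs_le fun i j => ?_
  have hsplit := congrFun (congrFun (eq_geom_sum_add_pow_mul hW' (m + 1)) i) j
  rw [Matrix.add_apply, Matrix.sum_apply, Finset.sum_range_succ] at hsplit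
  have hsum := Finset.sum_nonneg fun k (_ : k ∈ Finset.range m) => nonneg_pow hX k i j
  rw [abs_of_nonneg (nonneg_pow hX m i j)]
  linarith [nonneg_mul (nonneg_pow hX (m + 1)) hW i j]

end Neumann

section ResolventComparison

variable {T F G : Matrix (Fin n) (Fin n) ℝ}

theorem specRad_add_le_one (hT : ∀ i j, 0 ≤ T i j) (hF : ∀ i j, 0 ≤ F i j)
    (hTr : specRad T < 1) (hFr : specRad (F * (1 - T)⁻¹) < 1) : specRad (T + F) ≤ 1 := by
  set N := (1 - T)⁻¹
  set V := (1 - F * N)⁻¹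
  have hN0 : ∀ i j, 0 ≤ N i j := inv_one_sub_nonneg hT hTr
  have hN : N * (1 - T) = 1 := nonsing_inv_mul _ (isUnit_det_one_sub_of_specRad_lt_one hTr)
  have hN' : (1 - T) * N = 1 := mul_nonsing_inv _ (isUnit_det_one_sub_of_specRad_lt_one hTr)
  have hV : (1 - F * N) * V = 1 := mul_nonsing_inv _ (isUnit_det_one_sub_of_specRad_lt_one hFr)
  have hfactor : 1 - (T + F) = (1 - F * N) * (1 - T) := by
    rw [sub_mul, one_mul, mul_assoc, hN, mul_one]
    abel
  refine specRad_le_one_of_one_sub_mul_eq_one (W := N * V) (nonneg_add hT hF)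
    (nonneg_mul hN0 (inv_one_sub_nonneg (nonneg_mul hF hN0) hFr)) ?_
  rw [hfactor, mul_assoc, ← mul_assoc (1 - T), hN', one_mul, hV]

theorem specRad_mul_inv_one_sub_le_one (hT : ∀ i j, 0 ≤ T i j) (hF : ∀ i j, 0 ≤ F i j)
    (h : specRad (T + F) < 1) : specRad (F * (1 - T)⁻¹) ≤ 1 := by
  have hTr : specRad T < 1 :=
    (specRad_mono hT fun i j => le_add_of_nonneg_right (hF i j)).trans_lt h
  set N := (1 - T)⁻¹
  set S := (1 - (T + F))⁻¹
  have hN : N * (1 - T) = 1 := nonsing_inv_mul _ (isUnit_det_one_sub_of_specRad_lt_one hTr)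
  have hS : (1 - (T + F)) * S = 1 := mul_nonsing_inv _ (isUnit_det_one_sub_of_specRad_lt_one h)
  have hNS : N * (1 + F * S) = S := by
    rw [← hS, ← add_mul, show 1 - (T + F) + F = 1 - T by abel, ← mul_assoc, hN, one_mul]
  refine specRad_le_one_of_one_sub_mul_eq_one (W := 1 + F * S)
    (nonneg_mul hF (inv_one_sub_nonneg hT hTr))
    (nonneg_add nonneg_one (nonneg_mul hF (inv_one_sub_nonneg (nonneg_add hT hF) h))) ?_
  rw [sub_mul, one_mul, mul_assoc, hNS]
  abel

lemma specRad_inv_smul_lt_one {t : ℝ} (h : specRad T < t) : specRad (t⁻¹ • T) < 1 := by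
  have ht : 0 < t := (specRad_nonneg T).trans_lt h
  rwa [specRad_smul, abs_of_pos (inv_pos.2 ht), inv_mul_lt_one₀ ht]

theorem specRad_add_le (hT : ∀ i j, 0 ≤ T i j) (hG : ∀ i j, 0 ≤ G i j) {t : ℝ}
    (hTt : specRad T < t) (hGt : specRad (G * (1 - t⁻¹ • T)⁻¹) < t) : specRad (T + G) ≤ t := by
  have ht : 0 < t := (specRad_nonneg T).trans_lt hTt
  have h := specRad_add_le_one (nonneg_smul (inv_nonneg.2 ht.le) hT)
    (nonneg_smul (inv_nonneg.2 ht.le) hG) (specRad_inv_smul_lt_one hTt)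
    (by rwa [Matrix.smul_mul, specRad_smul, abs_of_pos (inv_pos.2 ht), inv_mul_lt_one₀ ht])
  rwa [← smul_add, specRad_smul, abs_of_pos (inv_pos.2 ht), inv_mul_le_one₀ ht] at h

theorem specRad_mul_inv_one_sub_smul_le (hT : ∀ i j, 0 ≤ T i j) (hG : ∀ i j, 0 ≤ G i j)
    {t : ℝ} (h : specRad (T + G) < t) : specRad (G * (1 - t⁻¹ • T)⁻¹) ≤ t := by
  have ht : 0 < t := (specRad_nonneg _).trans_lt h
  have h' := specRad_mul_inv_one_sub_le_one (nonneg_smul (inv_nonneg.2 ht.le) hT)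
    (nonneg_smul (inv_nonneg.2 ht.le) hG)
    (by rwa [← smul_add, specRad_smul, abs_of_pos (inv_pos.2 ht), inv_mul_lt_one₀ ht])
  rwa [Matrix.smul_mul, specRad_smul, abs_of_pos (inv_pos.2 ht), inv_mul_le_one₀ ht] at h'

lemma inv_one_sub_inv_smul_nonneg (hT : ∀ i j, 0 ≤ T i j) {t : ℝ} (h : specRad T < t) :
    ∀ i j, 0 ≤ (1 - t⁻¹ • T)⁻¹ i j :=
  inv_one_sub_nonneg (nonneg_smul (inv_nonneg.2 ((specRad_nonneg T).trans_lt h).le) hT)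
    (specRad_inv_smul_lt_one h)

/-- The resolvent identity `Nₛ - Nₜ = (s⁻¹ - t⁻¹) • Nₛ * T * Nₜ` for `Nₜ = (1 - t⁻¹ • T)⁻¹`. -/
lemma inv_one_sub_smul_antitone (hT : ∀ i j, 0 ≤ T i j) {s t : ℝ} (hTs : specRad T < s)
    (hst : s ≤ t) : ∀ i j, (1 - t⁻¹ • T)⁻¹ i j ≤ (1 - s⁻¹ • T)⁻¹ i j := by
  have hs : 0 < s := (specRad_nonneg T).trans_lt hTs
  have hTt : specRad T < t := hTs.trans_le hst
  set Ns := (1 - s⁻¹ • T)⁻¹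
  set Nt := (1 - t⁻¹ • T)⁻¹
  have hNs : Ns * (1 - s⁻¹ • T) = 1 :=
    nonsing_inv_mul _ (isUnit_det_one_sub_of_specRad_lt_one (specRad_inv_smul_lt_one hTs))
  have hNt : (1 - t⁻¹ • T) * Nt = 1 :=
    mul_nonsing_inv _ (isUnit_det_one_sub_of_specRad_lt_one (specRad_inv_smul_lt_one hTt))
  have key : Ns - Nt = (s⁻¹ - t⁻¹) • (Ns * T * Nt) := by
    calc Ns - Nt = Ns * (1 - t⁻¹ • T) * Nt - Ns * (1 - s⁻¹ • T) * Nt := by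
          rw [mul_assoc Ns, hNt, mul_one, hNs, one_mul]
      _ = Ns * ((1 - t⁻¹ • T) - (1 - s⁻¹ • T)) * Nt := by rw [← sub_mul, ← mul_sub]
      _ = (s⁻¹ - t⁻¹) • (Ns * T * Nt) := by
          rw [show (1 - t⁻¹ • T) - (1 - s⁻¹ • T) = (s⁻¹ - t⁻¹) • T by rw [sub_smul]; abel,
            Matrix.mul_smul, Matrix.smul_mul]
  intro i j
  have hij := congrFun (congrFun key i) j
  simp only [Matrix.sub_apply, Matrix.smul_apply, smul_eq_mul] at hij
  have := mul_nonneg (sub_nonneg.2 (inv_anti₀ hs hst)) (nonneg_mul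
    (nonneg_mul (inv_one_sub_inv_smul_nonneg hT hTs) hT) (inv_one_sub_inv_smul_nonneg hT hTt) i j)
  linarith

lemma specRad_mul_inv_one_sub_smul_antitone (hT : ∀ i j, 0 ≤ T i j) (hF : ∀ i j, 0 ≤ F i j)
    {s t : ℝ} (hTs : specRad T < s) (hst : s ≤ t) :
    specRad (F * (1 - t⁻¹ • T)⁻¹) ≤ specRad (F * (1 - s⁻¹ • T)⁻¹) :=
  specRad_mono (nonneg_mul hF (inv_one_sub_inv_smul_nonneg hT (hTs.trans_le hst)))
    (mul_le_mul_entrywise hF (fun _ _ => le_rfl) (inv_one_sub_inv_smul_nonneg hT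
      (hTs.trans_le hst)) (inv_one_sub_smul_antitone hT hTs hst))

end ResolventComparison

/-- Irreducibility puts an entry of `F` on a cycle, so the diagonal of `(T + c • F) ^ (k + 1)`
grows linearly in `c`. -/
theorem exists_lt_specRad_add_smul {T F : Matrix (Fin n) (Fin n) ℝ} (hT : ∀ i j, 0 ≤ T i j)
    (hF : ∀ i j, 0 ≤ F i j) (hF0 : F ≠ 0) (hirr : MatIrred (T + F)) (r : ℝ) :
    ∃ c : ℝ, 0 < c ∧ r < specRad (T + c • F) := by
  obtain ⟨a, b, hab⟩ : ∃ a b, 0 < F a b := by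
    by_contra! h
    exact hF0 (Matrix.ext fun i j => le_antisymm (h i j) (hF i j))
  obtain ⟨k, -, hk⟩ := hirr b a
  set t := max r 0 + 1
  set D := ((T + F) ^ k) b a * F a b
  have hD : 0 < D := mul_pos hk hab
  set c := max 1 (t ^ (k + 1) / D)
  have hc : 1 ≤ c := le_max_left _ _
  have hTcF : ∀ i j, 0 ≤ (T + c • F) i j := nonneg_add hT (nonneg_smul (by linarith) hF)
  have hle : ∀ i j, (T + F) i j ≤ (T + c • F) i j := fun i j => by
    simp only [Matrix.add_apply, Matrix.smul_apply, smul_eq_mul]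
    nlinarith [hF i j]
  refine ⟨c, by linarith, (by linarith [le_max_left r 0] : r < t).trans_le
    (le_specRad_of_pow_le_diag hTcF k.succ_ne_zero (by positivity) (i := b) ?_)⟩
  calc t ^ (k + 1) ≤ c * D := (div_le_iff₀ hD).1 (le_max_right _ _)
    _ = ((T + F) ^ k) b a * (c * F a b) := by ring
    _ ≤ ((T + c • F) ^ k) b a * (T + c • F) a b := by
        refine mul_le_mul (pow_le_pow_entrywise (nonneg_add hT hF) hle k b a) ?_ (by positivity)
          (nonneg_pow hTcF k b a)
        simp only [Matrix.add_apply, Matrix.smul_apply, smul_eq_mul]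
        linarith [hT a b]
    _ ≤ ((T + c • F) ^ (k + 1)) b b := by
        rw [pow_succ]
        exact apply_mul_apply_le_mul_apply (nonneg_pow hTcF k) hTcF b a b

theorem scaling_achieves_growth_rate_general {n : ℕ} (T F : Matrix (Fin n) (Fin n) ℝ)
    (hT : ∀ i j, 0 ≤ T i j) (hF : ∀ i j, 0 ≤ F i j)
    (hF0 : F ≠ 0) (hirr : MatIrred (T + F))
    (s : ℝ) (hs : specRad T < s)
    (q : ℝ) (hq : q = specRad (F * (1 - s⁻¹ • T)⁻¹) / s) :
    0 < q ∧ specRad (T + q⁻¹ • F) = s := by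
  have hs0 : 0 < s := (specRad_nonneg T).trans_lt hs
  have hpos : 0 < specRad (F * (1 - s⁻¹ • T)⁻¹) := by
    refine (specRad_nonneg _).lt_of_ne fun h0 => ?_
    obtain ⟨c, hc, hlt⟩ := exists_lt_specRad_add_smul hT hF hF0 hirr s
    refine hlt.not_ge (specRad_add_le hT (nonneg_smul hc.le hF) hs ?_)
    rwa [Matrix.smul_mul, specRad_smul, ← h0, mul_zero]
  have hq0 : 0 < q := by rw [hq]; exact div_pos hpos hs0
  have hqF : ∀ i j, 0 ≤ (q⁻¹ • F) i j := nonneg_smul (inv_nonneg.2 hq0.le) hF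
  have hscale : ∀ t : ℝ, specRad (q⁻¹ • F * (1 - t⁻¹ • T)⁻¹) =
      s * (specRad (F * (1 - t⁻¹ • T)⁻¹) / specRad (F * (1 - s⁻¹ • T)⁻¹)) := fun t => by
    rw [Matrix.smul_mul, specRad_smul, abs_of_pos (inv_pos.2 hq0), hq]
    field_simp
  refine ⟨hq0, le_antisymm (le_of_forall_gt_imp_ge_of_dense fun t hst => ?_) ?_⟩
  · refine specRad_add_le hT hqF (hs.trans hst) ?_
    have hg := (div_le_one hpos).2 (specRad_mul_inv_one_sub_smul_antitone hT hF hs hst.le)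
    rw [hscale]
    nlinarith
  · by_contra! hlt
    obtain ⟨t, hMt, hts⟩ := exists_between hlt
    have hTt : specRad T < t :=
      (specRad_mono hT fun i j => le_add_of_nonneg_right (hqF i j)).trans_lt hMt
    have hg := (one_le_div hpos).2 (specRad_mul_inv_one_sub_smul_antitone hT hF hTt hts.le)
    have h := specRad_mul_inv_one_sub_smul_le hT hqF hMt
    rw [hscale] at h
    nlinarith

theorem scaling_achieves_growth_rate {n : ℕ} (T F : Matrix (Fin n) (Fin n) ℝ)
    (hT : ∀ i j, 0 ≤ T i j) (hF : ∀ i j, 0 ≤ F i j)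
    (hρ : specRad T < 1) (hF0 : F ≠ 0) (hirr : MatIrred (T + F))
    (s : ℝ) (hs : specRad T < s)
    (q : ℝ) (hq : q = specRad (F * (1 - s⁻¹ • T)⁻¹) / s) :
    0 < q ∧ specRad (T + q⁻¹ • F) = s :=
  scaling_achieves_growth_rate_general T F hT hF hF0 hirr s hs q hq
end

section
/- Let T and F be nonnegative n×n matrices with ρ(T) < 1, F ≠ 0, and T + F irreducible, and let Q = F(I−T)^{-1}. Then every column of Q contains a positive entry. -/
open Matrix Filter Topology

/-!
By Gelfand's formula `ρ(T) < 1` gives `‖T ^ m‖ < 1` for some `m`, so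
`M = (1 - T)⁻¹ = (∑ k < m, T ^ k) * ∑ q, (T ^ m) ^ q` is entrywise nonnegative and satisfies
`M = 1 + T * M`. If column `j` of `F * M` vanished, then `F` would vanish on every column in the
support `S = {k | 0 < M k j}`, which contains `j` and, by `M = 1 + T * M`, is closed under
predecessors for `T`, hence for `T + F`. Irreducibility of `T + F` makes `S` everything, so `F = 0`.
-/

open scoped Matrix.Norms.Frobenius

theorem exists_nnnorm_pow_lt_one_of_spectralRadius_toReal_lt_one {A : Type*} [NormedRing A]
    [NormedAlgebra ℂ A] [CompleteSpace A] {a : A} (ha : (spectralRadius ℂ a).toReal < 1) :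
    ∃ m, ‖a ^ m‖₊ < 1 := by
  have hfin : spectralRadius ℂ a ≠ ⊤ :=
    ((spectrum.spectralRadius_le_pow_nnnorm_pow_one_div ℂ a 0).trans_lt
      (by simpa using ENNReal.mul_lt_top ENNReal.coe_lt_top ENNReal.coe_lt_top)).ne
  have hρ : spectralRadius ℂ a < 1 := by
    simpa using (ENNReal.lt_ofReal_iff_toReal_lt hfin).mpr ha
  obtain ⟨m, hlt, hpos⟩ :=
    ((spectrum.pow_nnnorm_pow_one_div_tendsto_nhds_spectralRadius a).eventually_lt_const hρ
      |>.and (eventually_gt_atTop 0)).exists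
  refine ⟨m, ?_⟩
  by_contra! h
  exact (ENNReal.one_le_rpow (ENNReal.one_le_coe_iff.mpr h) (by positivity)).not_gt hlt

theorem one_sub_mul_geom_sum_mul_tsum_pow_eq_one {R : Type*} [NormedRing R]
    [HasSummableGeomSeries R] (x : R) {m : ℕ} (h : ‖x ^ m‖ < 1) :
    (1 - x) * ((∑ k ∈ Finset.range m, x ^ k) * ∑' q, (x ^ m) ^ q) = 1 := by
  rw [← mul_assoc, mul_neg_geom_sum, mul_neg_geom_series _ h]

namespace Matrix

variable {ι : Type*}

theorem tsum_apply_nonneg {f : ℕ → Matrix ι ι ℝ} (hf : Summable f)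
    (hf0 : ∀ q i j, 0 ≤ f q i j) (i j : ι) : 0 ≤ (∑' q, f q) i j :=
  (Pi.hasSum.mp (Pi.hasSum.mp hf.hasSum i) j).nonneg fun q => hf0 q i j

variable [Fintype ι]

theorem mul_apply_nonneg {A B : Matrix ι ι ℝ} (hA : ∀ i j, 0 ≤ A i j)
    (hB : ∀ i j, 0 ≤ B i j) (i j : ι) : 0 ≤ (A * B) i j :=
  Finset.sum_nonneg fun k _ => mul_nonneg (hA i k) (hB k j)

theorem eq_zero_of_mul_apply_eq_zero {A B : Matrix ι ι ℝ} (hA : ∀ i j, 0 ≤ A i j)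
    (hB : ∀ i j, 0 ≤ B i j) {i j k : ι} (h : (A * B) i j = 0) (hk : 0 < B k j) :
    A i k = 0 := by
  have hterm : A i k * B k j = 0 :=
    (Finset.sum_eq_zero_iff_of_nonneg fun l _ => mul_nonneg (hA i l) (hB l j)).mp h k
      (Finset.mem_univ k)
  exact (mul_eq_zero.mp hterm).resolve_right hk.ne'

variable [DecidableEq ι]

theorem mem_of_pow_apply_pos {A : Matrix ι ι ℝ} (hA : ∀ i j, 0 ≤ A i j) {S : Set ι}
    (hS : ∀ i k, 0 < A i k → k ∈ S → i ∈ S) (m : ℕ) {i k : ι} (h : 0 < (A ^ m) i k)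
    (hk : k ∈ S) : i ∈ S := by
  induction m generalizing i with
  | zero =>
    obtain rfl : i = k := by
      by_contra hne
      simp [one_apply_ne hne] at h
    exact hk
  | succ m ih =>
    rw [pow_succ', mul_apply, Finset.sum_pos_iff_of_nonneg
      fun l _ => mul_nonneg (hA i l) (pow_apply_nonneg hA m l k)] at h
    obtain ⟨l, -, hl⟩ := h
    exact hS i l (pos_of_mul_pos_left hl (pow_apply_nonneg hA m l k))
      (ih (pos_of_mul_pos_right hl (hA i l)))

section ResolventEquation

variable {T M : Matrix ι ι ℝ}

theorem one_le_apply_self_of_eq_one_add_mul (hT : ∀ i j, 0 ≤ T i j) (hM : ∀ i j, 0 ≤ M i j)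
    (hTM : M = 1 + T * M) (j : ι) : 1 ≤ M j j := by
  rw [hTM, add_apply, one_apply_eq]
  exact le_add_of_nonneg_right (mul_apply_nonneg hT hM j j)

theorem apply_pos_of_eq_one_add_mul (hT : ∀ i j, 0 ≤ T i j) (hM : ∀ i j, 0 ≤ M i j)
    (hTM : M = 1 + T * M) {i j k : ι} (hik : 0 < T i k) (hk : 0 < M k j) : 0 < M i j := by
  have hterm : T i k * M k j ≤ (T * M) i j :=
    Finset.single_le_sum (f := fun l => T i l * M l j) (fun l _ => mul_nonneg (hT i l) (hM l j))
      (Finset.mem_univ k)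
  rw [hTM, add_apply]
  exact add_pos_of_nonneg_of_pos (zero_le_one_elem i j) ((mul_pos hik hk).trans_le hterm)

end ResolventEquation

theorem exists_norm_pow_lt_one_of_specRad_lt_one {n : ℕ} {T : Matrix (Fin n) (Fin n) ℝ}
    (hT : specRad T < 1) : ∃ m, ‖T ^ m‖ < 1 := by
  obtain ⟨m, hlt⟩ := exists_nnnorm_pow_lt_one_of_spectralRadius_toReal_lt_one hT
  have hmap : ‖(T ^ m).map Complex.ofReal‖₊ < 1 := by
    convert hlt using 2
    exact T.map_pow Complex.ofRealHom m
  rw [frobenius_nnnorm_map_eq _ _ Complex.nnnorm_real] at hmap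
  exact ⟨m, mod_cast hmap⟩

theorem exists_nonneg_mul_eq_one_of_specRad_lt_one {n : ℕ} {T : Matrix (Fin n) (Fin n) ℝ}
    (hT : ∀ i j, 0 ≤ T i j) (hρ : specRad T < 1) :
    ∃ M : Matrix (Fin n) (Fin n) ℝ, (1 - T) * M = 1 ∧ ∀ i j, 0 ≤ M i j := by
  obtain ⟨m, hm⟩ := exists_norm_pow_lt_one_of_specRad_lt_one hρ
  refine ⟨_, one_sub_mul_geom_sum_mul_tsum_pow_eq_one T hm, mul_apply_nonneg ?_ ?_⟩
  · intro i j
    rw [sum_apply]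
    exact Finset.sum_nonneg fun k _ => pow_apply_nonneg hT k i j
  · refine tsum_apply_nonneg (summable_geometric_of_norm_lt_one hm) fun q => ?_
    rw [← pow_mul]
    exact pow_apply_nonneg hT _

end Matrix

theorem nextgen_columns_positive {n : ℕ} (T F : Matrix (Fin n) (Fin n) ℝ)
    (hT : ∀ i j, 0 ≤ T i j) (hF : ∀ i j, 0 ≤ F i j)
    (hρ : specRad T < 1) (hF0 : F ≠ 0) (hirr : MatIrred (T + F)) :
    ∀ j, ∃ i, 0 < (F * (1 - T)⁻¹) i j := by
  intro j
  obtain ⟨M, hM, hMnn⟩ := exists_nonneg_mul_eq_one_of_specRad_lt_one hT hρ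
  have hresolvent : M = 1 + T * M := by
    rwa [sub_mul, one_mul, sub_eq_iff_eq_add] at hM
  rw [inv_eq_right_inv hM]
  by_contra! hcol
  have hFM : ∀ i, (F * M) i j = 0 := fun i => (hcol i).antisymm (mul_apply_nonneg hF hMnn i j)
  let S : Set (Fin n) := {k | 0 < M k j}
  have hFS : ∀ i, ∀ k ∈ S, F i k = 0 := fun i k hk =>
    eq_zero_of_mul_apply_eq_zero hF hMnn (hFM i) hk
  have hS : ∀ i k, 0 < (T + F) i k → k ∈ S → i ∈ S := by
    intro i k hik hk
    rw [Matrix.add_apply, hFS i k hk, add_zero] at hik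
    exact apply_pos_of_eq_one_add_mul hT hMnn hresolvent hik hk
  have hjS : j ∈ S :=
    zero_lt_one.trans_le (one_le_apply_self_of_eq_one_add_mul hT hMnn hresolvent j)
  apply hF0
  ext i k
  obtain ⟨m, -, hm⟩ := hirr k j
  exact hFS i k (mem_of_pow_apply_pos (fun i k => add_nonneg (hT i k) (hF i k)) hS m hm hjS)
end
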